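/- For the control â(t) := Σ_{n≥0}[1_{[t_n,s_n)}(t) − 1_{[s_n,t_{n+1})}(t)], the function Y(t) := ∫_t^1 â(r) dr satisfies: for t ∈ [s_n, t_{n+1}), Y(t) = 2^{-(n+2)} − (t_{n+1} − t) ≥ 2^{-(n+3)} > 0, and for t ∈ [t_n, s_n), Y(t) = 2^{-(n+3)} + (s_n − t) > 0. In particular Y(t) > 0 for all t ∈ [0,1). -/

import Mathlib

open MeasureTheory Set

noncomputable def tn (n : ℕ) : ℝ := 1 - 1 / 2 ^ n
noncomputable def sn (n : ℕ) : ℝ := (tn n + 3 * tn (n + 1)) / 4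
noncomputable def ahat (x : ℝ) : ℝ :=
  ∑' n : ℕ, ((Ico (tn n) (sn n)).indicator (fun _ => (1 : ℝ)) x
    - (Ico (sn n) (tn (n + 1))).indicator (fun _ => (1 : ℝ)) x)
noncomputable def Yhat (t : ℝ) : ℝ := ∫ r in t..1, ahat r

/-!
On the `n`-th block `[tₙ, tₙ₊₁)` the control is `+1` for three quarters of the block and `-1`
for the last quarter, so the integral over the block is `2^{-(n+2)}`. Hence
`Y(tₙ) - Y(tₙ₊₁) = 2^{-(n+2)}`; since `Y` is continuous with `Y(1) = 0` and `tₙ → 1`, this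
telescopes to `Y(tₙ) = 2^{-(n+1)}`.
Inside a block `Y` is then affine, and the formulas and positivity follow.
-/

open Filter Topology Function

lemma sn_sub_tn (n : ℕ) : sn n - tn n = 3 / 2 ^ (n + 3) := by
  simp only [sn, tn]; ring

lemma tn_succ_sub_sn (n : ℕ) : tn (n + 1) - sn n = 1 / 2 ^ (n + 3) := by
  simp only [sn, tn]; ring

lemma tn_lt_sn (n : ℕ) : tn n < sn n :=
  sub_pos.1 (sn_sub_tn n ▸ by positivity)

lemma sn_lt_tn_succ (n : ℕ) : sn n < tn (n + 1) :=
  sub_pos.1 (tn_succ_sub_sn n ▸ by positivity)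

lemma tn_strictMono : StrictMono tn :=
  strictMono_nat_of_lt_succ fun n => (tn_lt_sn n).trans (sn_lt_tn_succ n)

lemma tn_zero : tn 0 = 0 := by simp [tn]

lemma tn_nonneg (n : ℕ) : 0 ≤ tn n := tn_zero ▸ tn_strictMono.monotone n.zero_le

lemma tn_lt_one (n : ℕ) : tn n < 1 := by
  have : (0 : ℝ) < 1 / 2 ^ n := by positivity
  simp only [tn]; linarith

lemma tendsto_one_div_two_pow : Tendsto (fun n : ℕ => (1 : ℝ) / 2 ^ n) atTop (𝓝 0) := by
  simpa [one_div_pow] using tendsto_pow_atTop_nhds_zero_of_lt_one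
    (by norm_num : (0 : ℝ) ≤ 1 / 2) (by norm_num)

lemma tendsto_tn : Tendsto tn atTop (𝓝 1) := by
  have h := tendsto_one_div_two_pow.const_sub 1
  rwa [sub_zero] at h

theorem exists_mem_Ico_succ {α : Type*} [LinearOrder α] {u : ℕ → α} {x : α} (h0 : u 0 ≤ x)
    {m : ℕ} (hm : x < u m) : ∃ n, x ∈ Ico (u n) (u (n + 1)) := by
  induction m with
  | zero => exact absurd h0 hm.not_ge
  | succ m ih =>
    by_cases h : x < u m
    · exact ih h
    · exact ⟨m, not_lt.1 h, hm⟩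

lemma exists_mem_Ico_tn {x : ℝ} (hx : x ∈ Ico 0 1) : ∃ n, x ∈ Ico (tn n) (tn (n + 1)) :=
  have ⟨_, hm⟩ := (tendsto_tn.eventually (lt_mem_nhds hx.2)).exists
  exists_mem_Ico_succ (tn_zero ▸ hx.1) hm

lemma pairwise_disjoint_Ico_tn : Pairwise (Disjoint on fun n => Ico (tn n) (tn (n + 1))) := by
  simpa using tn_strictMono.monotone.pairwise_disjoint_on_Ico_succ

noncomputable def ahatTerm (n : ℕ) (x : ℝ) : ℝ :=
  (Ico (tn n) (sn n)).indicator (fun _ => (1 : ℝ)) x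
    - (Ico (sn n) (tn (n + 1))).indicator (fun _ => (1 : ℝ)) x

lemma ahat_eq_tsum (x : ℝ) : ahat x = ∑' n, ahatTerm n x := rfl

lemma ahatTerm_eq_zero {n : ℕ} {x : ℝ} (hx : x ∉ Ico (tn n) (tn (n + 1))) :
    ahatTerm n x = 0 := by
  rw [ahatTerm, indicator_of_notMem fun h => hx ⟨h.1, h.2.trans (sn_lt_tn_succ n)⟩,
    indicator_of_notMem fun h => hx ⟨(tn_lt_sn n).le.trans h.1, h.2⟩, sub_zero]

lemma ahat_eq_ahatTerm {n : ℕ} {x : ℝ} (hx : x ∈ Ico (tn n) (tn (n + 1))) :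
    ahat x = ahatTerm n x :=
  tsum_eq_single n fun _ hm => ahatTerm_eq_zero
    (disjoint_left.1 (pairwise_disjoint_Ico_tn hm.symm) hx)

lemma ahat_of_mem_Ico_tn_sn {n : ℕ} {x : ℝ} (hx : x ∈ Ico (tn n) (sn n)) : ahat x = 1 := by
  rw [ahat_eq_ahatTerm ⟨hx.1, hx.2.trans (sn_lt_tn_succ n)⟩, ahatTerm, indicator_of_mem hx,
    indicator_of_notMem fun h => hx.2.not_ge h.1, sub_zero]

lemma ahat_of_mem_Ico_sn_tn {n : ℕ} {x : ℝ} (hx : x ∈ Ico (sn n) (tn (n + 1))) :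
    ahat x = -1 := by
  rw [ahat_eq_ahatTerm ⟨(tn_lt_sn n).le.trans hx.1, hx.2⟩, ahatTerm,
    indicator_of_notMem fun h => h.2.not_ge hx.1, indicator_of_mem hx, zero_sub]

lemma ahat_of_notMem_Ico {x : ℝ} (hx : x ∉ Ico 0 1) : ahat x = 0 := by
  rw [ahat_eq_tsum, ← tsum_zero]
  exact tsum_congr fun n => ahatTerm_eq_zero fun h =>
    hx (Ico_subset_Ico (tn_nonneg n) (tn_lt_one (n + 1)).le h)

lemma abs_ahat_le_one (x : ℝ) : |ahat x| ≤ 1 := by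
  by_cases hx : x ∈ Ico 0 1
  · obtain ⟨n, hn⟩ := exists_mem_Ico_tn hx
    rcases lt_or_ge x (sn n) with h | h
    · simp [ahat_of_mem_Ico_tn_sn ⟨hn.1, h⟩]
    · simp [ahat_of_mem_Ico_sn_tn ⟨h, hn.2⟩]
  · simp [ahat_of_notMem_Ico hx]

lemma measurable_ahat : Measurable ahat :=
  Measurable.tsum fun _ => (measurable_const.indicator measurableSet_Ico).sub
    (measurable_const.indicator measurableSet_Ico)

lemma ahat_intervalIntegrable (a b : ℝ) : IntervalIntegrable ahat volume a b :=
  (intervalIntegrable_const (c := (1 : ℝ))).mono_fun measurable_ahat.aestronglyMeasurable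
    (ae_of_all _ fun x => by simpa using abs_ahat_le_one x)

theorem intervalIntegral.integral_eq_sub_smul_of_eqOn_Ico {E : Type*} [NormedAddCommGroup E]
    [NormedSpace ℝ E] [CompleteSpace E] {f : ℝ → E} {a b : ℝ} {c : E} (hab : a ≤ b)
    (h : EqOn f (fun _ => c) (Ico a b)) : ∫ x in a..b, f x = (b - a) • c := by
  rw [intervalIntegral.integral_of_le hab, ← integral_Ico_eq_integral_Ioc,
    setIntegral_congr_fun measurableSet_Ico h, setIntegral_const, Real.volume_real_Ico_of_le hab]

lemma continuous_Yhat : Continuous Yhat := by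
  have : Yhat = fun t => -∫ r in (1 : ℝ)..t, ahat r :=
    funext fun t => intervalIntegral.integral_symm _ _
  rw [this]
  exact (intervalIntegral.continuous_primitive ahat_intervalIntegrable 1).neg

lemma Yhat_one : Yhat 1 = 0 := intervalIntegral.integral_same

lemma Yhat_eq_integral_add (t t' : ℝ) : Yhat t = (∫ r in t..t', ahat r) + Yhat t' :=
  (intervalIntegral.integral_add_adjacent_intervals (ahat_intervalIntegrable t t')
    (ahat_intervalIntegrable t' 1)).symm

lemma Yhat_eq_Yhat_sn_add {n : ℕ} {t : ℝ} (ht : t ∈ Icc (tn n) (sn n)) :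
    Yhat t = Yhat (sn n) + (sn n - t) := by
  rw [Yhat_eq_integral_add t (sn n), intervalIntegral.integral_eq_sub_smul_of_eqOn_Ico ht.2
    fun x hx => ahat_of_mem_Ico_tn_sn ⟨ht.1.trans hx.1, hx.2⟩, smul_eq_mul, mul_one, add_comm]

lemma Yhat_eq_Yhat_tn_succ_sub {n : ℕ} {t : ℝ} (ht : t ∈ Icc (sn n) (tn (n + 1))) :
    Yhat t = Yhat (tn (n + 1)) - (tn (n + 1) - t) := by
  rw [Yhat_eq_integral_add t (tn (n + 1)), intervalIntegral.integral_eq_sub_smul_of_eqOn_Ico ht.2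
    fun x hx => ahat_of_mem_Ico_sn_tn ⟨ht.1.trans hx.1, hx.2⟩, smul_neg, smul_eq_mul, mul_one]
  ring

lemma Yhat_tn_eq_Yhat_tn_succ_add (n : ℕ) :
    Yhat (tn n) = Yhat (tn (n + 1)) + 1 / 2 ^ (n + 2) := by
  rw [Yhat_eq_Yhat_sn_add ⟨le_rfl, (tn_lt_sn n).le⟩,
    Yhat_eq_Yhat_tn_succ_sub ⟨le_rfl, (sn_lt_tn_succ n).le⟩, sn_sub_tn, tn_succ_sub_sn]
  ring

lemma Yhat_tn (n : ℕ) : Yhat (tn n) = 1 / 2 ^ (n + 1) := by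
  have hconst : (fun n => Yhat (tn n) - 1 / 2 ^ (n + 1)) = fun _ => Yhat (tn 0) - 1 / 2 := by
    funext n
    induction n with
    | zero => norm_num
    | succ n ih => rw [← ih, Yhat_tn_eq_Yhat_tn_succ_add n]; ring
  have hlim : Tendsto (fun n => Yhat (tn n) - 1 / 2 ^ (n + 1)) atTop (𝓝 0) := by
    have h := ((continuous_Yhat.tendsto 1).comp tendsto_tn).sub
      (tendsto_one_div_two_pow.comp (tendsto_add_atTop_nat 1))
    rwa [Yhat_one, sub_zero] at h
  rw [hconst, tendsto_const_nhds_iff] at hlim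
  linarith [congrFun hconst n]

lemma Yhat_of_mem_Icc_sn_tn {n : ℕ} {t : ℝ} (ht : t ∈ Icc (sn n) (tn (n + 1))) :
    Yhat t = 1 / 2 ^ (n + 2) - (tn (n + 1) - t) := by
  rw [Yhat_eq_Yhat_tn_succ_sub ht, Yhat_tn]

lemma Yhat_sn (n : ℕ) : Yhat (sn n) = 1 / 2 ^ (n + 3) := by
  rw [Yhat_of_mem_Icc_sn_tn ⟨le_rfl, (sn_lt_tn_succ n).le⟩, tn_succ_sub_sn]
  ring

lemma Yhat_of_mem_Icc_tn_sn {n : ℕ} {t : ℝ} (ht : t ∈ Icc (tn n) (sn n)) :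
    Yhat t = 1 / 2 ^ (n + 3) + (sn n - t) := by
  rw [Yhat_eq_Yhat_sn_add ht, Yhat_sn]

lemma one_div_two_pow_le_Yhat_of_mem_Icc_sn_tn {n : ℕ} {t : ℝ}
    (ht : t ∈ Icc (sn n) (tn (n + 1))) : 1 / 2 ^ (n + 3) ≤ Yhat t := by
  have hgap : tn (n + 1) - t ≤ 1 / 2 ^ (n + 3) := tn_succ_sub_sn n ▸ by linarith [ht.1]
  have hhalf : (1 : ℝ) / 2 ^ (n + 2) = 2 * (1 / 2 ^ (n + 3)) := by ring
  rw [Yhat_of_mem_Icc_sn_tn ht]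
  linarith

lemma Yhat_pos {t : ℝ} (ht : t ∈ Ico 0 1) : 0 < Yhat t := by
  obtain ⟨n, hn⟩ := exists_mem_Ico_tn ht
  rcases lt_or_ge t (sn n) with h | h
  · rw [Yhat_of_mem_Icc_tn_sn ⟨hn.1, h.le⟩]
    have : (0 : ℝ) < 1 / 2 ^ (n + 3) := by positivity
    linarith
  · exact (by positivity : (0 : ℝ) < 1 / 2 ^ (n + 3)).trans_le
      (one_div_two_pow_le_Yhat_of_mem_Icc_sn_tn ⟨h, hn.2.le⟩)

theorem stmt6 :
    (∀ n : ℕ, ∀ t ∈ Ico (sn n) (tn (n + 1)),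
      Yhat t = 1 / 2 ^ (n + 2) - (tn (n + 1) - t) ∧ 1 / 2 ^ (n + 3) ≤ Yhat t) ∧
    (∀ n : ℕ, ∀ t ∈ Ico (tn n) (sn n),
      Yhat t = 1 / 2 ^ (n + 3) + (sn n - t)) ∧
    (∀ t ∈ Ico (0 : ℝ) 1, 0 < Yhat t) :=
  ⟨fun _ _ ht => ⟨Yhat_of_mem_Icc_sn_tn (Ico_subset_Icc_self ht),
      one_div_two_pow_le_Yhat_of_mem_Icc_sn_tn (Ico_subset_Icc_self ht)⟩,
    fun _ _ ht => Yhat_of_mem_Icc_tn_sn (Ico_subset_Icc_self ht),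
    fun _ ht => Yhat_pos ht⟩
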